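/- arXiv:2104.04419 — 2 statements merged into one kernel-verified Lean document; each statement's English description precedes it below -/
import Mathlib

section
/- For all positive definite density matrices ρ and σ on a finite-dimensional complex Hilbert space, the Belavkin–Staszewski entropy satisfies D̂(ρ‖σ) ≤ ‖σ⁻¹ρ − 1‖, where ‖·‖ is the operator norm and 1 is the identity operator. -/
/-! Since `log x ≤ x - 1` for `x > 0`, the functional calculus gives `log X ≤ X - 1` for
`X = ρ^{1/2} σ⁻¹ ρ^{1/2}`, and pairing with `ρ ≥ 0` yields
`D̂(ρ‖σ) ≤ Tr[ρ X] - Tr ρ = Tr[ρ (σ⁻¹ρ - 1)]` by cyclicity of the trace. Writing `ρ = ∑ᵢ vᵢ vᵢ*`,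
the last trace is `∑ᵢ ⟪vᵢ, (σ⁻¹ρ - 1) vᵢ⟫ ≤ ‖σ⁻¹ρ - 1‖ Tr ρ = ‖σ⁻¹ρ - 1‖`. -/

open scoped Kronecker ComplexOrder

namespace QIT

variable {n : Type*} [Fintype n] [DecidableEq n]

/-- Operator norm of a matrix, i.e. the norm of the induced operator on Euclidean space. -/
noncomputable def opNorm (M : Matrix n n ℂ) : ℝ :=
  ‖Matrix.toEuclideanCLM (𝕜 := ℂ) M‖

/-- Functional calculus for Hermitian matrices (junk value `0` on non-Hermitian inputs). -/
noncomputable def matCfc (f : ℝ → ℝ) (M : Matrix n n ℂ) : Matrix n n ℂ :=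
  if hM : M.IsHermitian then
    (hM.eigenvectorUnitary : Matrix n n ℂ) *
      Matrix.diagonal (fun i => (f (hM.eigenvalues i) : ℂ)) *
      star (hM.eigenvectorUnitary : Matrix n n ℂ)
  else 0

/-- Matrix logarithm via the functional calculus. -/
noncomputable def mlog (M : Matrix n n ℂ) : Matrix n n ℂ := matCfc Real.log M

/-- Real powers of a matrix via the functional calculus. -/
noncomputable def mpow (M : Matrix n n ℂ) (q : ℝ) : Matrix n n ℂ :=
  matCfc (fun x => x ^ q) M

/-- Umegaki relative entropy `D(ρ‖σ) = Tr[ρ (log ρ - log σ)]`. -/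
noncomputable def relEntropy (ρ σ : Matrix n n ℂ) : ℝ :=
  (Matrix.trace (ρ * (mlog ρ - mlog σ))).re

/-- Belavkin-Staszewski relative entropy `D̂(ρ‖σ) = Tr[ρ log (ρ^{1/2} σ⁻¹ ρ^{1/2})]`. -/
noncomputable def bsEntropy (ρ σ : Matrix n n ℂ) : ℝ :=
  (Matrix.trace (ρ * mlog (mpow ρ (1/2) * σ⁻¹ * mpow ρ (1/2)))).re

/-- `q`-geometric Rényi divergence
`D̂_q(ρ‖σ) = (q-1)⁻¹ log Tr[σ^{1/2} (σ^{-1/2} ρ σ^{-1/2})^q σ^{1/2}]`. -/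
noncomputable def geomRenyi (q : ℝ) (ρ σ : Matrix n n ℂ) : ℝ :=
  (q - 1)⁻¹ *
    Real.log
      (Matrix.trace
        (mpow σ (1/2) * mpow (mpow σ (-(1/2)) * ρ * mpow σ (-(1/2))) q * mpow σ (1/2))).re

/-- Trace norm `‖M‖₁ = Tr ((M† M)^{1/2})`. -/
noncomputable def traceNorm (M : Matrix n n ℂ) : ℝ :=
  (((Matrix.posSemidef_conjTranspose_mul_self M).1.eigenvectorUnitary : Matrix n n ℂ) *
      Matrix.diagonal (fun i => ((Real.sqrt
        ((Matrix.posSemidef_conjTranspose_mul_self M).1.eigenvalues i) : ℝ) : ℂ)) *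
      star ((Matrix.posSemidef_conjTranspose_mul_self M).1.eigenvectorUnitary :
        Matrix n n ℂ)).trace.re

/-- Partial trace over the second tensor factor. -/
noncomputable def ptraceRight {a c : Type*} [Fintype a] [Fintype c]
    (M : Matrix (a × c) (a × c) ℂ) : Matrix a a ℂ :=
  fun i j => ∑ k, M (i, k) (j, k)

/-- Partial trace over the first tensor factor. -/
noncomputable def ptraceLeft {a c : Type*} [Fintype a] [Fintype c]
    (M : Matrix (a × c) (a × c) ℂ) : Matrix c c ℂ :=
  fun i j => ∑ k, M (k, i) (k, j)

end QIT

open Matrix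
open scoped MatrixOrder

section CFC

variable {A : Type*} [TopologicalSpace A] [Ring A] [StarRing A] [PartialOrder A]
  [StarOrderedRing A] [Algebra ℝ A] [ContinuousFunctionalCalculus ℝ A IsSelfAdjoint]
  [NonnegSpectrumClass ℝ A]

lemma cfc_log_le_sub_one {a : A} (ha : IsStrictlyPositive a) : cfc Real.log a ≤ a - 1 :=
  calc cfc Real.log a ≤ cfc (fun x => x - 1) a :=
        cfc_mono (fun x hx => Real.log_le_sub_one_of_pos (ha.spectrum_pos hx))
          (Real.continuousOn_log.mono fun x hx => (ha.spectrum_pos hx).ne')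
    _ = a - 1 := by rw [cfc_sub .., cfc_id' .., cfc_const_one ..]

end CFC

namespace Matrix

variable {n R : Type*} [Fintype n] [CommSemiring R]

lemma trace_sum_vecMulVec_star_mul [StarRing R] {m : ℕ} (v : Fin m → n → R) (A : Matrix n n R) :
    ((∑ i, vecMulVec (v i) (star (v i))) * A).trace = ∑ i, star (v i) ⬝ᵥ (A *ᵥ v i) := by
  simp only [Finset.sum_mul, trace_sum, vecMulVec_mul, trace_vecMulVec, dotProduct_comm (v _),
    dotProduct_mulVec]

lemma trace_mul_self_mul_conj (S B : Matrix n n R) :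
    (S * S * (S * B * S)).trace = (S * S * (B * (S * S))).trace := by
  rw [← trace_mul_cycle, trace_mul_comm (S * S), trace_mul_comm _ (S * S)]
  simp only [mul_assoc]

namespace PosSemidef

variable {𝕜 : Type*} [RCLike 𝕜]

lemma trace_mul_nonneg {M A : Matrix n n 𝕜} (hM : M.PosSemidef) (hA : A.PosSemidef) :
    0 ≤ (M * A).trace := by
  obtain ⟨m, v, rfl⟩ := posSemidef_iff_eq_sum_vecMulVec.mp hM
  rw [trace_sum_vecMulVec_star_mul]
  exact Finset.sum_nonneg fun i _ => hA.dotProduct_mulVec_nonneg (v i)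

lemma trace_mul_mono [DecidableEq n] {M A B : Matrix n n 𝕜} (hM : M.PosSemidef) (hAB : A ≤ B) :
    (M * A).trace ≤ (M * B).trace := by
  simpa [mul_sub, trace_sub] using hM.trace_mul_nonneg hAB

end PosSemidef

end Matrix

namespace QIT

variable {n : Type*} [Fintype n] [DecidableEq n]

lemma matCfc_eq_cfc (f : ℝ → ℝ) {M : Matrix n n ℂ} (hM : M.IsHermitian) :
    matCfc f M = cfc f M := by
  rw [matCfc, dif_pos hM, hM.cfc_eq, IsHermitian.cfc, Unitary.conjStarAlgAut_apply]
  rfl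

lemma mpow_half_eq_sqrt {M : Matrix n n ℂ} (hM : M.PosSemidef) :
    mpow M (1 / 2) = CFC.sqrt M := by
  rw [mpow, matCfc_eq_cfc _ hM.1, CFC.sqrt_eq_rpow, CFC.rpow_eq_cfc_real hM.nonneg]

lemma re_star_dotProduct_mulVec_le_opNorm (A : Matrix n n ℂ) (v : n → ℂ) :
    (star v ⬝ᵥ (A *ᵥ v)).re ≤ opNorm A * (star v ⬝ᵥ v).re := by
  set x : EuclideanSpace ℂ n := WithLp.toLp 2 v
  have hinner : star v ⬝ᵥ (A *ᵥ v) = inner ℂ x (toEuclideanCLM (𝕜 := ℂ) A x) :=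
    dotProduct_comm _ _
  have hnorm : (star v ⬝ᵥ v).re = ‖x‖ ^ 2 := by
    rw [← inner_self_eq_norm_sq (𝕜 := ℂ), dotProduct_comm]
    rfl
  rw [hinner, hnorm]
  calc RCLike.re (inner ℂ x (toEuclideanCLM (𝕜 := ℂ) A x))
      ≤ ‖x‖ * ‖toEuclideanCLM (𝕜 := ℂ) A x‖ := re_inner_le_norm _ _
    _ ≤ ‖x‖ * (opNorm A * ‖x‖) := by gcongr; exact (toEuclideanCLM (𝕜 := ℂ) A).le_opNorm x
    _ = opNorm A * ‖x‖ ^ 2 := by ring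

lemma re_trace_mul_le_opNorm {M : Matrix n n ℂ} (hM : M.PosSemidef) (A : Matrix n n ℂ) :
    (M * A).trace.re ≤ opNorm A * M.trace.re := by
  obtain ⟨m, v, rfl⟩ := posSemidef_iff_eq_sum_vecMulVec.mp hM
  have htrace := trace_sum_vecMulVec_star_mul v 1
  rw [mul_one] at htrace
  rw [trace_sum_vecMulVec_star_mul, htrace, Complex.re_sum, Complex.re_sum, Finset.mul_sum]
  simp only [one_mulVec]
  exact Finset.sum_le_sum fun i _ => re_star_dotProduct_mulVec_le_opNorm A (v i)

theorem bsEntropy_le_opNorm_general {n : Type*} [Fintype n] [DecidableEq n]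
    (ρ σ : Matrix n n ℂ) (hρ : ρ.PosDef) (hσ : σ.PosDef)
    (hρtr : ρ.trace = 1) :
    bsEntropy ρ σ ≤ opNorm (σ⁻¹ * ρ - 1) := by
  set S := CFC.sqrt ρ
  have hSS : S * S = ρ := CFC.sqrt_mul_sqrt_self ρ hρ.posSemidef.nonneg
  have hX : IsStrictlyPositive (S * σ⁻¹ * S) :=
    IsStrictlyPositive.conjugate_of_isUnit_of_isSelfAdjoint _ _
      hρ.isStrictlyPositive.sqrt.isUnit (CFC.sqrt_nonneg ρ).isSelfAdjoint
      hσ.inv.isStrictlyPositive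
  calc bsEntropy ρ σ = (ρ * cfc Real.log (S * σ⁻¹ * S)).trace.re := by
        rw [bsEntropy, mpow_half_eq_sqrt hρ.posSemidef, mlog, matCfc_eq_cfc _ hX.isSelfAdjoint]
    _ ≤ (ρ * (S * σ⁻¹ * S - 1)).trace.re :=
        (Complex.le_def.1 (hρ.posSemidef.trace_mul_mono (cfc_log_le_sub_one hX))).1
    _ = (ρ * (σ⁻¹ * ρ - 1)).trace.re := by
        rw [mul_sub, mul_sub, trace_sub, trace_sub, ← hSS, trace_mul_self_mul_conj]
    _ ≤ opNorm (σ⁻¹ * ρ - 1) * ρ.trace.re := re_trace_mul_le_opNorm hρ.posSemidef _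
    _ = opNorm (σ⁻¹ * ρ - 1) := by simp [hρtr]

/-- For all positive definite density matrices `ρ`, `σ`, the
Belavkin-Staszewski entropy satisfies `D̂(ρ‖σ) ≤ ‖σ⁻¹ ρ - 1‖`. -/
theorem bsEntropy_le_opNorm {n : Type*} [Fintype n] [DecidableEq n]
    (ρ σ : Matrix n n ℂ) (hρ : ρ.PosDef) (hσ : σ.PosDef)
    (hρtr : ρ.trace = 1) (hσtr : σ.trace = 1) :
    bsEntropy ρ σ ≤ opNorm (σ⁻¹ * ρ - 1) :=
  bsEntropy_le_opNorm_general ρ σ hρ hσ hρtr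

end QIT
end

section
/- Let Φ be a local interaction on ℤ of range r and strength J with local dimension d, satisfying uniform clustering with decay function ε. Let A, B₁, B₂, B₃, C be adjacent finite intervals with |A|, |B₁| ≤ n, |B₂| ≥ ℓ and |B₃|, |C| ≤ m, and set B := B₁B₂B₃. Then for all observables Q_{AB₁} ∈ 𝔄_{AB₁} and Q_{B₃C} ∈ 𝔄_{B₃C} (viewed in 𝔄_{AB₁B₂B₃C}): ‖tr_B(ρ^B Q_{AB₁} Q_{B₃C}) − tr_B(ρ^B Q_{AB₁}) · tr_B(ρ^B Q_{B₃C})‖ ≤ d^{2n+2m} ‖Q_{AB₁}‖ ‖Q_{B₃C}‖ ε(ℓ). -/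
open Matrix
open scoped ComplexOrder

namespace SpinChain

variable (d : ℕ)

/-- Configurations of the spins in the finite region `Λ ⊂ ℤ`. -/
abbrev Cfg (Λ : Finset ℤ) : Type := (x : Λ) → Fin d

/-- The algebra of observables on the region `Λ`, i.e. linear operators on
`ℋ_Λ = ⊗_{x ∈ Λ} ℂ^d`. -/
abbrev Obs (Λ : Finset ℤ) : Type := Matrix (Cfg d Λ) (Cfg d Λ) ℂ

/-- Operator norm of an observable. -/
noncomputable def opNorm {Λ : Finset ℤ} (M : Obs d Λ) : ℝ :=
  ‖Matrix.toEuclideanCLM (𝕜 := ℂ) M‖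

/-- Trace norm `‖M‖₁ = Tr ((M†M)^{1/2})` of an observable. -/
noncomputable def traceNorm {Λ : Finset ℤ} (M : Obs d Λ) : ℝ :=
  (((Matrix.posSemidef_conjTranspose_mul_self M).1.eigenvectorUnitary.1 *
      diagonal (((↑) : ℝ → ℂ) ∘ Real.sqrt ∘ (Matrix.posSemidef_conjTranspose_mul_self M).1.eigenvalues) *
      (star (Matrix.posSemidef_conjTranspose_mul_self M).1.eigenvectorUnitary : Matrix (Cfg d Λ) (Cfg d Λ) ℂ)).trace).re

/-- Restriction of a configuration to a subregion. -/
def restrict {Λ' Λ : Finset ℤ} (h : Λ' ⊆ Λ) (f : Cfg d Λ) : Cfg d Λ' :=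
  fun x => f ⟨x.1, h x.2⟩

/-- The canonical embedding `𝔄_{Λ'} → 𝔄_Λ`, `R ↦ R ⊗ 1_{Λ ∖ Λ'}`. -/
def embed {Λ' Λ : Finset ℤ} (h : Λ' ⊆ Λ) (R : Obs d Λ') : Obs d Λ :=
  fun f g =>
    if ∀ x : Λ, x.1 ∉ Λ' → f x = g x then R (restrict d h f) (restrict d h g) else 0

/-- An observable `Q ∈ 𝔄_Λ` is supported in `Λ'` if it is the embedding of some
observable on `Λ'`. -/
def SupportedIn {Λ : Finset ℤ} (Λ' : Finset ℤ) (Q : Obs d Λ) : Prop :=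
  ∃ (h : Λ' ⊆ Λ) (R : Obs d Λ'), Q = embed d h R

/-- Operator-norm distance from `Q ∈ 𝔄_Λ` to the subalgebra of observables
supported in `Λ'`. -/
noncomputable def distSupp {Λ : Finset ℤ} (Λ' : Finset ℤ) (h : Λ' ⊆ Λ) (Q : Obs d Λ) : ℝ :=
  sInf {x : ℝ | ∃ R : Obs d Λ', x = opNorm d (Q - embed d h R)}

/-- The extended partial trace `tr_{Λ'} : 𝔄_Λ → 𝔄_Λ`, determined by
`tr_{Λ'}(R ⊗ S) = Tr(R) (1_{Λ'} ⊗ S)`. -/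
noncomputable def ptr {Λ' Λ : Finset ℤ} (h : Λ' ⊆ Λ) (Q : Obs d Λ) : Obs d Λ :=
  fun f g =>
    if restrict d h f = restrict d h g then
      ∑ c : Cfg d Λ',
        Q (fun x => if hx : x.1 ∈ Λ' then c ⟨x.1, hx⟩ else f x)
          (fun x => if hx : x.1 ∈ Λ' then c ⟨x.1, hx⟩ else g x)
    else 0

/-- The (possibly complex time) Heisenberg evolution `Q ↦ e^{isH} Q e^{-isH}`. -/
noncomputable def timeEvol {Λ : Finset ℤ} (H : Obs d Λ) (s : ℂ) (Q : Obs d Λ) : Obs d Λ :=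
  NormedSpace.exp ((Complex.I * s) • H) * Q * NormedSpace.exp (-((Complex.I * s) • H))

/-- A local interaction of range `r` and strength `J` on the chain `ℤ`:
a family of self-adjoint observables `Φ_X ∈ 𝔄_X` with `‖Φ_X‖ ≤ J`, vanishing
whenever `diam X > r`. -/
structure Interaction (r : ℕ) (J : ℝ) where
  φ : (X : Finset ℤ) → Obs d X
  herm : ∀ X, (φ X).IsHermitian
  strength : ∀ X, opNorm d (φ X) ≤ J
  finiteRange : ∀ X : Finset ℤ, ∀ x ∈ X, ∀ y ∈ X, (r : ℤ) < |x - y| → φ X = 0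

variable {d}

/-- The local Hamiltonian `H_Λ = ∑_{X ⊆ Λ} Φ_X`, as an observable on the ambient
region `I ⊇ Λ`. -/
noncomputable def ham {r : ℕ} {J : ℝ} (Φ : Interaction d r J) {I : Finset ℤ}
    (Λ : Finset ℤ) (h : Λ ⊆ I) : Obs d I :=
  ∑ X ∈ Λ.powerset.attach, embed d ((Finset.mem_powerset.mp X.2).trans h) (Φ.φ X.1)

/-- The Gibbs state `ρ^Λ = e^{-H_Λ} / Tr(e^{-H_Λ}) ∈ 𝔄_Λ` (at inverse temperature `β = 1`,
absorbed in the interaction). -/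
noncomputable def gibbs {r : ℕ} {J : ℝ} (Φ : Interaction d r J) (Λ : Finset ℤ) : Obs d Λ :=
  (Matrix.trace (NormedSpace.exp (-(ham Φ Λ (le_refl Λ)))))⁻¹ •
    NormedSpace.exp (-(ham Φ Λ (le_refl Λ)))

/-- The expansional `E_{X,Y} = e^{-H_{X∪Y}} e^{H_X + H_Y}`, as an observable on the
ambient region `I`. -/
noncomputable def expans {r : ℕ} {J : ℝ} (Φ : Interaction d r J) {I : Finset ℤ}
    (X Y : Finset ℤ) (hX : X ⊆ I) (hY : Y ⊆ I) : Obs d I :=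
  NormedSpace.exp (-(ham Φ (X ∪ Y) (Finset.union_subset hX hY))) *
    NormedSpace.exp (ham Φ X hX + ham Φ Y hY)

/-- `tr_Λ(ρ^Λ Q)`, where `ρ^Λ` is the Gibbs state on `Λ` embedded in `𝔄_I`. -/
noncomputable def trGibbs {r : ℕ} {J : ℝ} (Φ : Interaction d r J) {I : Finset ℤ}
    {Λ : Finset ℤ} (h : Λ ⊆ I) (Q : Obs d I) : Obs d I :=
  ptr d h (embed d h (gibbs Φ Λ) * Q)

/-- The finite-volume Gibbs expectation value `ψ_Λ(Q) = Tr(ρ^Λ Q)`. -/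
noncomputable def expec {r : ℕ} {J : ℝ} (Φ : Interaction d r J) (Λ : Finset ℤ)
    (Q : Obs d Λ) : ℂ :=
  Matrix.trace (gibbs Φ Λ * Q)

/-- The interaction `Φ` satisfies *uniform clustering* with decay function `ε`:
for every finite interval `I = ABC` split into three adjacent subintervals with
`|B| ≥ ℓ`, the covariance correlation of the Gibbs state `ρ^I` between `A` and `C`
is at most `ε ℓ`. -/
def UniformClustering {r : ℕ} {J : ℝ} (Φ : Interaction d r J) (ε : ℕ → ℝ) : Prop :=
  ∀ (a b c e : ℤ) (hab : a ≤ b) (hbc : b ≤ c) (hce : c ≤ e) (ℓ : ℕ), (ℓ : ℤ) ≤ c - b →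
    ∀ (QA : Obs d (Finset.Ico a b)) (QC : Obs d (Finset.Ico c e)),
      opNorm d QA ≤ 1 → opNorm d QC ≤ 1 →
      ‖(expec Φ (Finset.Ico a e)
            (embed d (Finset.Ico_subset_Ico le_rfl (hbc.trans hce)) QA *
              embed d (Finset.Ico_subset_Ico (hab.trans hbc) le_rfl) QC) -
          expec Φ (Finset.Ico a e)
              (embed d (Finset.Ico_subset_Ico le_rfl (hbc.trans hce)) QA) *
            expec Φ (Finset.Ico a e)
              (embed d (Finset.Ico_subset_Ico (hab.trans hbc) le_rfl) QC))‖ ≤ ε ℓ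

end SpinChain

/-! The matrix `D = tr_B(ρ^B Q₁ Q₂) - tr_B(ρ^B Q₁) tr_B(ρ^B Q₂)` is block diagonal for the
splitting `I = B ⊔ (A ∪ C)`, and its entry at outer configurations `(f, g)` is a covariance
`ψ_B(R₁ R₂) - ψ_B(R₁) ψ_B(R₂)`, where `R₁` is a block of `Q₁` living on `B₁` and `R₂` a block of
`Q₂` living on `B₃`. Blocks of an operator have smaller operator norm, so uniform clustering
bounds every entry of `D` by `‖Q₁‖ ‖Q₂‖ ε(ℓ)`; since each row and column of `D` has at most
`d^{|A|+|C|}` nonzero entries, the Schur test gives `‖D‖ ≤ d^{|A|+|C|} ‖Q₁‖ ‖Q₂‖ ε(ℓ)`. -/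

open scoped Matrix.Norms.L2Operator

namespace Matrix

variable {𝕜 m n : Type*} [RCLike 𝕜] [Fintype m] [Fintype n] [DecidableEq n]

theorem l2_opNorm_le_of_sum_norm_le (A : Matrix m n 𝕜) {c : ℝ} (hc : 0 ≤ c)
    (hrow : ∀ i, ∑ j, ‖A i j‖ ≤ c) (hcol : ∀ j, ∑ i, ‖A i j‖ ≤ c) : ‖A‖ ≤ c := by
  rw [l2_opNorm_def]
  refine ContinuousLinearMap.opNorm_le_bound _ hc fun x => ?_
  refine (sq_le_sq₀ (norm_nonneg _) (by positivity)).mp ?_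
  simp only [LinearEquiv.trans_apply, LinearMap.coe_toContinuousLinearMap', toLpLin_apply,
    EuclideanSpace.norm_sq_eq, mul_pow, mulVec, dotProduct]
  calc ∑ i, ‖∑ j, A i j * x j‖ ^ 2
      ≤ ∑ i, (∑ j, ‖A i j‖) * ∑ j, ‖A i j‖ * ‖x j‖ ^ 2 := by
        refine Finset.sum_le_sum fun i _ => ?_
        refine (pow_le_pow_left₀ (norm_nonneg _) (norm_sum_le _ _) 2).trans ?_
        -- Cauchy–Schwarz with the weights `‖A i j‖`
        refine Finset.sum_sq_le_sum_mul_sum_of_sq_le_mul _ (fun j _ => norm_nonneg _)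
          (fun j _ => by positivity) fun j _ => le_of_eq (by rw [norm_mul]; ring)
    _ ≤ ∑ i, c * ∑ j, ‖A i j‖ * ‖x j‖ ^ 2 :=
        Finset.sum_le_sum fun i _ => by gcongr; exact hrow i
    _ = c * ∑ j, (∑ i, ‖A i j‖) * ‖x j‖ ^ 2 := by
        rw [← Finset.mul_sum, Finset.sum_comm]; simp only [Finset.sum_mul]
    _ ≤ c * ∑ j, c * ‖x j‖ ^ 2 := by gcongr with j; exact hcol j
    _ = c ^ 2 * ∑ j, ‖x j‖ ^ 2 := by rw [← Finset.mul_sum]; ring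

theorem l2_opNorm_one_submatrix_le_one {k : Type*} [Fintype k] [DecidableEq m] {e : k → m}
    (he : Function.Injective e) : ‖(1 : Matrix m m 𝕜).submatrix e id‖ ≤ 1 := by
  refine l2_opNorm_le_of_sum_norm_le _ zero_le_one (fun i => by simp [one_apply, apply_ite])
    fun j => ?_
  simp only [submatrix_apply, id, one_apply, apply_ite, norm_one, norm_zero, Finset.sum_boole]
  exact_mod_cast Finset.card_le_one.2 fun a ha b hb => he (by simp_all)

theorem l2_opNorm_submatrix_le {k l : Type*} [Fintype k] [Fintype l] [DecidableEq l]
    (A : Matrix m n 𝕜) {e₁ : k → m} {e₂ : l → n} (he₁ : Function.Injective e₁)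
    (he₂ : Function.Injective e₂) : ‖A.submatrix e₁ e₂‖ ≤ ‖A‖ := by
  classical
  have hsub : A.submatrix e₁ e₂ =
      (1 : Matrix m m 𝕜).submatrix e₁ id * A * ((1 : Matrix n n 𝕜).submatrix e₂ id)ᴴ := by
    ext i j; simp [mul_apply, one_apply]
  calc ‖A.submatrix e₁ e₂‖ ≤ 1 * ‖A‖ * 1 := by
        rw [hsub]
        refine (l2_opNorm_mul _ _).trans ?_
        rw [l2_opNorm_conjTranspose]
        gcongr
        · exact (l2_opNorm_mul _ _).trans (by gcongr; exact l2_opNorm_one_submatrix_le_one he₁)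
        · exact l2_opNorm_one_submatrix_le_one he₂
    _ = ‖A‖ := by ring

end Matrix

namespace SpinChain

variable {d : ℕ} {Λ Λ' : Finset ℤ}

def patch (c : Cfg d Λ') (f : Cfg d Λ) : Cfg d Λ :=
  fun x => if hx : x.1 ∈ Λ' then c ⟨x.1, hx⟩ else f x

lemma patch_apply_of_mem (c : Cfg d Λ') (f : Cfg d Λ) {x : Λ} (hx : x.1 ∈ Λ') :
    patch c f x = c ⟨x.1, hx⟩ := dif_pos hx

lemma patch_apply_of_notMem (c : Cfg d Λ') (f : Cfg d Λ) {x : Λ} (hx : x.1 ∉ Λ') :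
    patch c f x = f x := dif_neg hx

@[simp] lemma restrict_patch (h : Λ' ⊆ Λ) (c : Cfg d Λ') (f : Cfg d Λ) :
    restrict d h (patch c f) = c := by
  funext x
  simp [restrict, patch, x.2]

@[simp] lemma patch_patch (c c' : Cfg d Λ') (f : Cfg d Λ) : patch c (patch c' f) = patch c f := by
  funext x
  by_cases hx : x.1 ∈ Λ' <;> simp [patch, hx]

lemma patch_injective (h : Λ' ⊆ Λ) (f : Cfg d Λ) :
    Function.Injective fun c : Cfg d Λ' => patch c f :=
  fun c c' hcc' => by simpa using congrArg (restrict d h) hcc'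

lemma patch_restrict_of_agree {h : Λ' ⊆ Λ} {f z : Cfg d Λ}
    (hfz : ∀ x : Λ, x.1 ∉ Λ' → f x = z x) : patch (restrict d h z) f = z := by
  funext x
  by_cases hx : x.1 ∈ Λ'
  · simp [patch, restrict, hx]
  · simp [patch, hx, hfz x hx]

lemma sum_ite_agree_eq_sum_patch {M : Type*} [AddCommMonoid M] (h : Λ' ⊆ Λ) (f : Cfg d Λ)
    (G : Cfg d Λ → M) :
    (∑ z : Cfg d Λ, if ∀ x : Λ, x.1 ∉ Λ' → f x = z x then G z else 0)
      = ∑ c : Cfg d Λ', G (patch c f) := by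
  rw [← Finset.sum_filter]
  refine Finset.sum_nbij' (restrict d h) (patch · f) (by simp) (fun c _ => ?_)
    (fun z hz => ?_) (fun c _ => restrict_patch h c f) (fun z hz => ?_)
  · simp only [Finset.mem_filter, Finset.mem_univ, true_and]
    exact fun x hx => (patch_apply_of_notMem c f hx).symm
  · exact patch_restrict_of_agree (Finset.mem_filter.1 hz).2
  · rw [patch_restrict_of_agree (Finset.mem_filter.1 hz).2]

lemma restrict_eq_restrict_iff (h : Λ' ⊆ Λ) {f g : Cfg d Λ} :
    restrict d h f = restrict d h g ↔ ∀ x : Λ, x.1 ∉ Λ \ Λ' → f x = g x := by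
  simp only [funext_iff, restrict, Subtype.forall, Finset.mem_sdiff, not_and, not_not]
  exact ⟨fun H x hx hx' => H x (hx' hx), fun H x hx => H x (h hx) fun _ => hx⟩

lemma sum_ite_restrict_eq (h : Λ' ⊆ Λ) (f : Cfg d Λ) (c : ℝ) :
    (∑ g : Cfg d Λ, if restrict d h f = restrict d h g then c else 0)
      = d ^ (Λ \ Λ').card * c := by
  simp_rw [restrict_eq_restrict_iff h]
  rw [sum_ite_agree_eq_sum_patch Finset.sdiff_subset]
  simp

lemma opNorm_eq_norm (M : Obs d Λ) : opNorm d M = ‖M‖ := rfl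

lemma opNorm_le_of_block_diagonal (h : Λ' ⊆ Λ) (M : Obs d Λ) {c : ℝ} (hc : 0 ≤ c)
    (hdiag : ∀ f g, restrict d h f ≠ restrict d h g → M f g = 0)
    (hent : ∀ f g, ‖M f g‖ ≤ c) : opNorm d M ≤ d ^ (Λ \ Λ').card * c := by
  have hbound : ∀ f g, ‖M f g‖ ≤ if restrict d h f = restrict d h g then c else 0 := by
    intro f g
    split_ifs with hfg
    · exact hent f g
    · simp [hdiag f g hfg]
  refine Matrix.l2_opNorm_le_of_sum_norm_le M (by positivity) (fun f => ?_) fun g => ?_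
  · exact (Finset.sum_le_sum fun g _ => hbound f g).trans (sum_ite_restrict_eq h f c).le
  · refine (Finset.sum_le_sum fun f _ => hbound f g).trans (le_of_eq ?_)
    rw [← sum_ite_restrict_eq h g c]
    exact Finset.sum_congr rfl fun f _ => if_congr eq_comm rfl rfl

/-- `block Λ' M f g` is the block of `M` at the outer configurations `f`, `g`, for the splitting
`ℋ_Λ = ℋ_{Λ'} ⊗ ℋ_{Λ ∖ Λ'}`. -/
def block (Λ' : Finset ℤ) (M : Obs d Λ) (f g : Cfg d Λ) : Obs d Λ' :=
  M.submatrix (patch · f) (patch · g)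

lemma opNorm_block_le (h : Λ' ⊆ Λ) (M : Obs d Λ) (f g : Cfg d Λ) :
    opNorm d (block Λ' M f g) ≤ opNorm d M :=
  Matrix.l2_opNorm_submatrix_le M (patch_injective h f) (patch_injective h g)

@[simp] lemma embed_zero (h : Λ' ⊆ Λ) : embed d h (0 : Obs d Λ') = 0 := by
  ext f g
  simp [embed]

lemma embed_smul (h : Λ' ⊆ Λ) (s : ℂ) (R : Obs d Λ') :
    embed d h (s • R) = s • embed d h R := by
  ext f g
  simp [embed]

lemma agree_of_embed_apply_ne_zero {h : Λ' ⊆ Λ} {R : Obs d Λ'} {f g : Cfg d Λ}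
    (hR : embed d h R f g ≠ 0) : ∀ x : Λ, x.1 ∉ Λ' → f x = g x := by
  by_contra hfg
  exact hR (if_neg hfg)

lemma ptr_apply_of_eq (h : Λ' ⊆ Λ) (M : Obs d Λ) {f g : Cfg d Λ}
    (hfg : restrict d h f = restrict d h g) : ptr d h M f g = trace (block Λ' M f g) :=
  if_pos hfg

lemma ptr_apply_of_ne (h : Λ' ⊆ Λ) (M : Obs d Λ) {f g : Cfg d Λ}
    (hfg : restrict d h f ≠ restrict d h g) : ptr d h M f g = 0 :=
  if_neg hfg

lemma ptr_mul_ptr_apply_of_ne (h : Λ' ⊆ Λ) (M N : Obs d Λ) {f g : Cfg d Λ}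
    (hfg : restrict d h f ≠ restrict d h g) : (ptr d h M * ptr d h N) f g = 0 := by
  rw [mul_apply]
  refine Finset.sum_eq_zero fun y _ => ?_
  by_cases hfy : restrict d h f = restrict d h y
  · rw [ptr_apply_of_ne h N fun hyg => hfg (hfy.trans hyg), mul_zero]
  · rw [ptr_apply_of_ne h M hfy, zero_mul]

lemma block_embed_mul (h : Λ' ⊆ Λ) (ρ : Obs d Λ') (M : Obs d Λ) (f g : Cfg d Λ) :
    block Λ' (embed d h ρ * M) f g = ρ * block Λ' M f g := by
  ext b b'
  simp only [block, submatrix_apply, mul_apply, embed, ite_mul, zero_mul]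
  rw [sum_ite_agree_eq_sum_patch h]
  simp

lemma block_mul_of_agree {M N : Obs d Λ} {f g k : Cfg d Λ} (h : Λ' ⊆ Λ)
    (hk : ∀ (b b' : Cfg d Λ') z, M (patch b f) z * N z (patch b' g) ≠ 0 →
      ∀ x : Λ, x.1 ∉ Λ' → k x = z x) :
    block Λ' (M * N) f g = block Λ' M f k * block Λ' N k g := by
  ext b b'
  simp only [block, submatrix_apply, mul_apply]
  rw [← sum_ite_agree_eq_sum_patch h k fun z => M (patch b f) z * N z (patch b' g)]
  refine Finset.sum_congr rfl fun z _ => ?_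
  split_ifs with hkz
  · rfl
  · by_contra hne
    exact hkz (hk b b' z hne)

lemma restrict_eq_and_block_ne_zero_of_ptr_ne_zero (h : Λ' ⊆ Λ) {ρ : Obs d Λ'} {M : Obs d Λ}
    {f g : Cfg d Λ} (hne : ptr d h (embed d h ρ * M) f g ≠ 0) :
    restrict d h f = restrict d h g ∧ block Λ' M f g ≠ 0 := by
  by_cases hfg : restrict d h f = restrict d h g
  · refine ⟨hfg, fun hM => hne ?_⟩
    rw [ptr_apply_of_eq h _ hfg, block_embed_mul, hM, mul_zero, trace_zero]
  · exact absurd (ptr_apply_of_ne h _ hfg) hne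

section BlockOfEmbed

variable {B P B₁ : Finset ℤ}

lemma restrict_patch_eq_patch_restrict (hP : P ⊆ Λ) (hB₁ : B₁ ⊆ B)
    (hBP : ∀ x ∈ B, x ∈ P → x ∈ B₁) (b : Cfg d B) (f : Cfg d Λ) :
    restrict d hP (patch b f) = patch (restrict d hB₁ b) (restrict d hP f) := by
  funext x
  by_cases hxB : x.1 ∈ B
  · rw [patch_apply_of_mem _ _ (hBP _ hxB x.2)]
    exact patch_apply_of_mem (x := ⟨x.1, hP x.2⟩) b f hxB
  · rw [patch_apply_of_notMem _ _ fun hx => hxB (hB₁ hx)]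
    exact patch_apply_of_notMem (x := ⟨x.1, hP x.2⟩) b f hxB

lemma block_embed (hB : B ⊆ Λ) (hP : P ⊆ Λ) (hB₁ : B₁ ⊆ B) (hB₁P : B₁ ⊆ P)
    (hBP : ∀ x ∈ B, x ∈ P → x ∈ B₁) (Q : Obs d P) {f k : Cfg d Λ}
    (hfk : ∀ x : Λ, x.1 ∉ P → x.1 ∉ B → f x = k x) :
    block B (embed d hP Q) f k = embed d hB₁ (block B₁ Q (restrict d hP f) (restrict d hP k)) := by
  ext b b'
  have hagree : (∀ x : Λ, x.1 ∉ P → patch b f x = patch b' k x) ↔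
      ∀ x : B, x.1 ∉ B₁ → b x = b' x := by
    refine ⟨fun H x hx => ?_, fun H x hxP => ?_⟩
    · have hxP : x.1 ∉ P := fun hxP => hx (hBP _ x.2 hxP)
      have hx' := H ⟨x.1, hB x.2⟩ hxP
      rwa [patch_apply_of_mem (x := ⟨x.1, hB x.2⟩) _ _ x.2,
        patch_apply_of_mem (x := ⟨x.1, hB x.2⟩) _ _ x.2] at hx'
    · by_cases hxB : x.1 ∈ B
      · rw [patch_apply_of_mem _ _ hxB, patch_apply_of_mem _ _ hxB]
        exact H ⟨x.1, hxB⟩ fun hx => hxP (hB₁P hx)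
      · rw [patch_apply_of_notMem _ _ hxB, patch_apply_of_notMem _ _ hxB]
        exact hfk x hxP hxB
  simp only [block, submatrix_apply, embed, hagree,
    restrict_patch_eq_patch_restrict hP hB₁ hBP]

lemma agree_of_block_embed_ne_zero {hP : P ⊆ Λ} {Q : Obs d P} {f k : Cfg d Λ}
    (hQ : block B (embed d hP Q) f k ≠ 0) : ∀ x : Λ, x.1 ∉ P → x.1 ∉ B → f x = k x := by
  intro x hxP hxB
  by_contra hfk
  refine hQ (Matrix.ext fun b b' => if_neg fun H => hfk ?_)
  simpa [patch_apply_of_notMem _ _ hxB] using H x hxP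

end BlockOfEmbed

section Clustering

variable {r : ℕ} {J : ℝ} {Φ : Interaction d r J} {ε : ℕ → ℝ}

lemma UniformClustering.nonneg (hclu : UniformClustering Φ ε) (ℓ : ℕ) : 0 ≤ ε ℓ :=
  (norm_nonneg _).trans <| hclu 0 0 ℓ ℓ le_rfl (by omega) le_rfl ℓ (by simp) 0 0
    (by simp [opNorm_eq_norm]) (by simp [opNorm_eq_norm])

lemma UniformClustering.norm_covariance_le (hclu : UniformClustering Φ ε) {a b c e : ℤ}
    (hab : a ≤ b) (hbc : b ≤ c) (hce : c ≤ e) {ℓ : ℕ} (hℓ : (ℓ : ℤ) ≤ c - b)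
    (QA : Obs d (Finset.Ico a b)) (QC : Obs d (Finset.Ico c e)) :
    ‖(expec Φ (Finset.Ico a e)
          (embed d (Finset.Ico_subset_Ico le_rfl (hbc.trans hce)) QA *
            embed d (Finset.Ico_subset_Ico (hab.trans hbc) le_rfl) QC) -
        expec Φ (Finset.Ico a e) (embed d (Finset.Ico_subset_Ico le_rfl (hbc.trans hce)) QA) *
          expec Φ (Finset.Ico a e) (embed d (Finset.Ico_subset_Ico (hab.trans hbc) le_rfl) QC))‖
      ≤ opNorm d QA * opNorm d QC * ε ℓ := by
  rcases eq_or_ne QA 0 with rfl | hA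
  · simp [expec, opNorm_eq_norm]
  rcases eq_or_ne QC 0 with rfl | hC
  · simp [expec, opNorm_eq_norm]
  have hA' : (0 : ℝ) < opNorm d QA := by rw [opNorm_eq_norm]; exact norm_pos_iff.2 hA
  have hC' : (0 : ℝ) < opNorm d QC := by rw [opNorm_eq_norm]; exact norm_pos_iff.2 hC
  have hunit : ∀ {Λ : Finset ℤ} (Q : Obs d Λ), Q ≠ 0 →
      opNorm d (((opNorm d Q : ℂ))⁻¹ • Q) ≤ 1 := fun Q hQ => by
    simp [opNorm_eq_norm, norm_smul, inv_mul_cancel₀ (norm_ne_zero_iff.2 hQ)]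
  have hnormalized := hclu a b c e hab hbc hce ℓ hℓ _ _ (hunit QA hA) (hunit QC hC)
  simp only [embed_smul, expec, Matrix.mul_smul, Matrix.smul_mul, trace_smul, smul_eq_mul]
    at hnormalized
  have hscale : ∀ z : ℂ,
      ‖z‖ = opNorm d QA * opNorm d QC * ‖((opNorm d QA * opNorm d QC : ℝ) : ℂ)⁻¹ * z‖ := by
    intro z
    rw [norm_mul, norm_inv, Complex.norm_real, Real.norm_of_nonneg (by positivity)]
    field_simp
  rw [hscale]
  gcongr
  refine le_of_eq_of_le (congrArg norm ?_) hnormalized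
  simp only [expec]
  push_cast
  ring

end Clustering

/-- In the products below, the intermediate configuration is forced to agree with `g` on `A`
and with `f` on `C`. -/
def spliceAt (a : ℤ) (g f : Cfg d Λ) : Cfg d Λ :=
  fun x => if x.1 < a then g x else f x

lemma spliceAt_apply_of_lt {a : ℤ} (g f : Cfg d Λ) {x : Λ} (hx : x.1 < a) :
    spliceAt a g f x = g x := if_pos hx

lemma spliceAt_apply_of_le {a : ℤ} (g f : Cfg d Λ) {x : Λ} (hx : a ≤ x.1) :
    spliceAt a g f x = f x := if_neg (not_lt.2 hx)

section Intervals

variable {a₀ a₁ a₂ a₃ a₄ a₅ : ℤ} (hB : Finset.Ico a₁ a₄ ⊆ Finset.Ico a₀ a₅)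
  (hP : Finset.Ico a₀ a₂ ⊆ Finset.Ico a₀ a₅) (hR : Finset.Ico a₃ a₅ ⊆ Finset.Ico a₀ a₅)
  (ρ : Obs d (Finset.Ico a₁ a₄)) (Q₁ : Obs d (Finset.Ico a₀ a₂)) (Q₂ : Obs d (Finset.Ico a₃ a₅))

lemma ptr_embed_mul_embed_mul_embed_apply (h₁₂ : a₁ ≤ a₂) (h₂₃ : a₂ ≤ a₃) (h₃₄ : a₃ ≤ a₄)
    {f g : Cfg d (Finset.Ico a₀ a₅)} (hfg : restrict d hB f = restrict d hB g) :
    ptr d hB (embed d hB ρ * embed d hP Q₁ * embed d hR Q₂) f g =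
      trace (ρ * (block _ (embed d hP Q₁) f (spliceAt a₁ g f) *
        block _ (embed d hR Q₂) (spliceAt a₁ g f) g)) := by
  rw [ptr_apply_of_eq hB _ hfg, mul_assoc, block_embed_mul, block_mul_of_agree hB]
  intro b b' z hne x hxB
  have hxB' := Finset.mem_Ico.not.1 hxB
  by_cases hx : x.1 < a₁
  · have hzg := agree_of_embed_apply_ne_zero (right_ne_zero_of_mul hne) x
      (by rw [Finset.mem_Ico]; omega)
    rw [patch_apply_of_notMem _ _ hxB] at hzg
    rw [spliceAt_apply_of_lt g f hx, hzg]
  · have hfz := agree_of_embed_apply_ne_zero (left_ne_zero_of_mul hne) x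
      (by rw [Finset.mem_Ico]; omega)
    rw [patch_apply_of_notMem _ _ hxB] at hfz
    rw [spliceAt_apply_of_le g f (not_lt.1 hx), hfz]

lemma ptr_embed_mul_mul_ptr_embed_mul_apply (h₁₂ : a₁ ≤ a₂) (h₂₃ : a₂ ≤ a₃) (h₃₄ : a₃ ≤ a₄)
    {f g : Cfg d (Finset.Ico a₀ a₅)} (hfg : restrict d hB f = restrict d hB g) :
    (ptr d hB (embed d hB ρ * embed d hP Q₁) * ptr d hB (embed d hB ρ * embed d hR Q₂)) f g =
      trace (ρ * block _ (embed d hP Q₁) f (spliceAt a₁ g f)) *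
        trace (ρ * block _ (embed d hR Q₂) (spliceAt a₁ g f) g) := by
  have hfk : restrict d hB f = restrict d hB (spliceAt a₁ g f) :=
    funext fun x => (spliceAt_apply_of_le g f (Finset.mem_Ico.1 x.2).1).symm
  rw [mul_apply, Finset.sum_eq_single (spliceAt a₁ g f)]
  · rw [ptr_apply_of_eq hB _ hfk, ptr_apply_of_eq hB _ (hfk.symm.trans hfg), block_embed_mul,
      block_embed_mul]
  · intro y _ hyk
    by_contra hne
    obtain ⟨hfy, hQ₁⟩ := restrict_eq_and_block_ne_zero_of_ptr_ne_zero hB (left_ne_zero_of_mul hne)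
    obtain ⟨-, hQ₂⟩ := restrict_eq_and_block_ne_zero_of_ptr_ne_zero hB (right_ne_zero_of_mul hne)
    refine hyk (funext fun x => ?_)
    by_cases hxB : x.1 ∈ Finset.Ico a₁ a₄
    · rw [spliceAt_apply_of_le g f (Finset.mem_Ico.1 hxB).1]
      exact (congrFun hfy ⟨x.1, hxB⟩).symm
    have hxB' := Finset.mem_Ico.not.1 hxB
    by_cases hx : x.1 < a₁
    · rw [spliceAt_apply_of_lt g f hx]
      exact agree_of_block_embed_ne_zero hQ₂ x (by rw [Finset.mem_Ico]; omega) hxB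
    · rw [spliceAt_apply_of_le g f (not_lt.1 hx)]
      exact (agree_of_block_embed_ne_zero hQ₁ x (by rw [Finset.mem_Ico]; omega) hxB).symm
  · simp

lemma norm_ptr_gibbs_covariance_apply_le {r : ℕ} {J : ℝ} {Φ : Interaction d r J} {ε : ℕ → ℝ}
    (hclu : UniformClustering Φ ε) (h₀₁ : a₀ ≤ a₁) (h₁₂ : a₁ ≤ a₂) (h₂₃ : a₂ ≤ a₃)
    (h₃₄ : a₃ ≤ a₄) (h₄₅ : a₄ ≤ a₅) {ℓ : ℕ} (hℓ : (ℓ : ℤ) ≤ a₃ - a₂)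
    (f g : Cfg d (Finset.Ico a₀ a₅)) :
    ‖(ptr d hB (embed d hB (gibbs Φ (Finset.Ico a₁ a₄)) * embed d hP Q₁ * embed d hR Q₂) -
        ptr d hB (embed d hB (gibbs Φ (Finset.Ico a₁ a₄)) * embed d hP Q₁) *
          ptr d hB (embed d hB (gibbs Φ (Finset.Ico a₁ a₄)) * embed d hR Q₂)) f g‖
      ≤ opNorm d Q₁ * opNorm d Q₂ * ε ℓ := by
  have hε := hclu.nonneg ℓ
  by_cases hfg : restrict d hB f = restrict d hB g
  swap
  · rw [Matrix.sub_apply, ptr_apply_of_ne hB _ hfg, ptr_mul_ptr_apply_of_ne hB _ _ hfg, sub_zero,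
      norm_zero]
    exact mul_nonneg (mul_nonneg (norm_nonneg _) (norm_nonneg _)) hε
  have hgA : ∀ x : Finset.Ico a₀ a₅, x.1 ∉ Finset.Ico a₃ a₅ → x.1 ∉ Finset.Ico a₁ a₄ →
      spliceAt a₁ g f x = g x := fun x hxR hxB => spliceAt_apply_of_lt g f <| by
    have := Finset.mem_Ico.1 x.2
    rw [Finset.mem_Ico] at hxR hxB
    omega
  have hfC : ∀ x : Finset.Ico a₀ a₅, x.1 ∉ Finset.Ico a₀ a₂ → x.1 ∉ Finset.Ico a₁ a₄ →
      f x = spliceAt a₁ g f x := fun x hxP hxB => (spliceAt_apply_of_le g f <| by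
    have := Finset.mem_Ico.1 x.2
    rw [Finset.mem_Ico] at hxP
    omega).symm
  have hB₁ : ∀ x ∈ Finset.Ico a₁ a₄, x ∈ Finset.Ico a₀ a₂ → x ∈ Finset.Ico a₁ a₂ :=
    fun x hxB hxP => Finset.mem_Ico.2 ⟨(Finset.mem_Ico.1 hxB).1, (Finset.mem_Ico.1 hxP).2⟩
  have hB₃ : ∀ x ∈ Finset.Ico a₁ a₄, x ∈ Finset.Ico a₃ a₅ → x ∈ Finset.Ico a₃ a₄ :=
    fun x hxB hxR => Finset.mem_Ico.2 ⟨(Finset.mem_Ico.1 hxR).1, (Finset.mem_Ico.1 hxB).2⟩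
  rw [Matrix.sub_apply, ptr_embed_mul_embed_mul_embed_apply hB hP hR _ _ _ h₁₂ h₂₃ h₃₄ hfg,
    ptr_embed_mul_mul_ptr_embed_mul_apply hB hP hR _ _ _ h₁₂ h₂₃ h₃₄ hfg,
    block_embed hB hP (Finset.Ico_subset_Ico le_rfl (h₂₃.trans h₃₄))
      (Finset.Ico_subset_Ico h₀₁ le_rfl) hB₁ _ hfC,
    block_embed hB hR (Finset.Ico_subset_Ico (h₁₂.trans h₂₃) le_rfl)
      (Finset.Ico_subset_Ico le_rfl h₄₅) hB₃ _ hgA]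
  refine (hclu.norm_covariance_le h₁₂ h₂₃ h₃₄ hℓ _ _).trans ?_
  refine mul_le_mul_of_nonneg_right (mul_le_mul ?_ ?_ (norm_nonneg _) (norm_nonneg _)) hε
  · exact opNorm_block_le (Finset.Ico_subset_Ico h₀₁ le_rfl) _ _ _
  · exact opNorm_block_le (Finset.Ico_subset_Ico le_rfl h₄₅) _ _ _

end Intervals

/-- Lemma `SchmidtDecompEstimate2`. Under uniform clustering with decay
`ε`, for adjacent intervals `A B₁ B₂ B₃ C` with `|A|, |B₁| ≤ n`, `|B₂| ≥ ℓ`,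
`|B₃|, |C| ≤ m` and with `B = B₁B₂B₃`:
`‖tr_B(ρ^B Q_{AB₁} Q_{B₃C}) - tr_B(ρ^B Q_{AB₁}) tr_B(ρ^B Q_{B₃C})‖ ≤
  d^{2n+2m} ‖Q_{AB₁}‖ ‖Q_{B₃C}‖ ε(ℓ)`. -/
theorem schmidt_decomp_estimate_two (d r : ℕ) (J : ℝ)
    (hd : 2 ≤ d)
    (Φ : Interaction d r J) (ε : ℕ → ℝ) (hclu : UniformClustering Φ ε)
    -- adjacent intervals A = [a₀,a₁), B₁ = [a₁,a₂), B₂ = [a₂,a₃), B₃ = [a₃,a₄), C = [a₄,a₅)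
    (a₀ a₁ a₂ a₃ a₄ a₅ : ℤ)
    (h₀₁ : a₀ ≤ a₁) (h₁₂ : a₁ ≤ a₂) (h₂₃ : a₂ ≤ a₃) (h₃₄ : a₃ ≤ a₄) (h₄₅ : a₄ ≤ a₅)
    (n m ℓ : ℕ)
    (hA : a₁ - a₀ ≤ (n : ℤ))
    (hB₂ : (ℓ : ℤ) ≤ a₃ - a₂)
    (hC : a₅ - a₄ ≤ (m : ℤ))
    (Q₁ : Obs d (Finset.Ico a₀ a₂)) (Q₂ : Obs d (Finset.Ico a₃ a₅)) :
    opNorm d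
      (ptr d (Finset.Ico_subset_Ico (by omega) (by omega) :
            Finset.Ico a₁ a₄ ⊆ Finset.Ico a₀ a₅)
          (embed d (Finset.Ico_subset_Ico (by omega) (by omega) :
                Finset.Ico a₁ a₄ ⊆ Finset.Ico a₀ a₅)
              (gibbs Φ (Finset.Ico a₁ a₄)) *
            embed d (Finset.Ico_subset_Ico (by omega) (by omega) :
                Finset.Ico a₀ a₂ ⊆ Finset.Ico a₀ a₅) Q₁ *
            embed d (Finset.Ico_subset_Ico (by omega) (by omega) :
                Finset.Ico a₃ a₅ ⊆ Finset.Ico a₀ a₅) Q₂) -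
        ptr d (Finset.Ico_subset_Ico (by omega) (by omega) :
            Finset.Ico a₁ a₄ ⊆ Finset.Ico a₀ a₅)
          (embed d (Finset.Ico_subset_Ico (by omega) (by omega) :
                Finset.Ico a₁ a₄ ⊆ Finset.Ico a₀ a₅)
              (gibbs Φ (Finset.Ico a₁ a₄)) *
            embed d (Finset.Ico_subset_Ico (by omega) (by omega) :
                Finset.Ico a₀ a₂ ⊆ Finset.Ico a₀ a₅) Q₁) *
        ptr d (Finset.Ico_subset_Ico (by omega) (by omega) :
            Finset.Ico a₁ a₄ ⊆ Finset.Ico a₀ a₅)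
          (embed d (Finset.Ico_subset_Ico (by omega) (by omega) :
                Finset.Ico a₁ a₄ ⊆ Finset.Ico a₀ a₅)
              (gibbs Φ (Finset.Ico a₁ a₄)) *
            embed d (Finset.Ico_subset_Ico (by omega) (by omega) :
                Finset.Ico a₃ a₅ ⊆ Finset.Ico a₀ a₅) Q₂)) ≤
      (d : ℝ) ^ (2 * n + 2 * m) * opNorm d Q₁ * opNorm d Q₂ * ε ℓ := by
  have hB : Finset.Ico a₁ a₄ ⊆ Finset.Ico a₀ a₅ := Finset.Ico_subset_Ico h₀₁ h₄₅
  have hc : 0 ≤ opNorm d Q₁ * opNorm d Q₂ * ε ℓ :=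
    mul_nonneg (mul_nonneg (norm_nonneg _) (norm_nonneg _)) (hclu.nonneg ℓ)
  have hcard : (Finset.Ico a₀ a₅ \ Finset.Ico a₁ a₄).card ≤ 2 * n + 2 * m := by
    rw [Finset.card_sdiff_of_subset hB, Int.card_Ico, Int.card_Ico]
    omega
  calc _ ≤ (d : ℝ) ^ (Finset.Ico a₀ a₅ \ Finset.Ico a₁ a₄).card *
        (opNorm d Q₁ * opNorm d Q₂ * ε ℓ) :=
        opNorm_le_of_block_diagonal hB _ hc
          (fun f g hfg => by
            rw [Matrix.sub_apply, ptr_apply_of_ne hB _ hfg, ptr_mul_ptr_apply_of_ne hB _ _ hfg,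
              sub_zero])
          (norm_ptr_gibbs_covariance_apply_le hB _ _ Q₁ Q₂ hclu h₀₁ h₁₂ h₂₃ h₃₄ h₄₅ hB₂)
    _ ≤ (d : ℝ) ^ (2 * n + 2 * m) * (opNorm d Q₁ * opNorm d Q₂ * ε ℓ) := by
        gcongr
        exact_mod_cast (by omega : 1 ≤ d)
    _ = _ := by ring

end SpinChain
end
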